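/- arXiv:2404.12201 — 5 statements merged into one kernel-verified Lean document; each statement's English description precedes it below -/
import Mathlib

section
/- Let A = ℕ ∩ ⋃_{n∈ℕ} [4^n, (2 - 1/n)·4^n). Then the upper density of A equals 2/3. -/
/-!
The set lies inside `⋃ₖ [4ᵏ, 2·4ᵏ)`, whose counting function never exceeds `2N/3`: the ratio
peaks just below `N = 2·4ᵏ`, where the count is `4 + 4² + ⋯ + 4ᵏ = (4ᵏ⁺¹ - 4)/3`.
Conversely, the `k`-th block of the set has at least `(1 - 1/k)·4ᵏ` elements, and
`∑_{k ≤ n} (1 - 1/k)·4ᵏ ≥ (2/3 - 2/n)·2·4ⁿ`, so along `N = 2·4ⁿ` the ratio tends to `2/3`.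
-/

open Filter
open scoped Classical

noncomputable def countIn (A : Set ℕ) (N : ℕ) : ℕ :=
  ((Finset.Icc 1 N).filter (fun n => n ∈ A)).card

noncomputable def upperDensity (A : Set ℕ) : ℝ :=
  limsup (fun N => (countIn A N : ℝ) / N) atTop

noncomputable def lowerDensity (A : Set ℕ) : ℝ :=
  liminf (fun N => (countIn A N : ℝ) / N) atTop

def hasDensity (A : Set ℕ) (d : ℝ) : Prop :=
  Tendsto (fun N => (countIn A N : ℝ) / N) atTop (nhds d)

open Finset Topology

lemma countIn_le_self (A : Set ℕ) (N : ℕ) : countIn A N ≤ N := by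
  simpa [countIn] using card_filter_le (Icc 1 N) (· ∈ A)

lemma countIn_mono {A B : Set ℕ} (h : A ⊆ B) (N : ℕ) : countIn A N ≤ countIn B N :=
  card_le_card (monotone_filter_right _ fun _ _ hm => h hm)

lemma card_le_countIn {A : Set ℕ} {s : Finset ℕ} {N : ℕ} (hA : ↑s ⊆ A) (hN : s ⊆ Icc 1 N) :
    s.card ≤ countIn A N :=
  card_le_card fun _ hm => mem_filter.2 ⟨hN hm, hA hm⟩

lemma countIn_div_nonneg (A : Set ℕ) (N : ℕ) : 0 ≤ (countIn A N : ℝ) / N := by positivity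

lemma countIn_div_le_one (A : Set ℕ) (N : ℕ) : (countIn A N : ℝ) / N ≤ 1 :=
  div_le_one_of_le₀ (by exact_mod_cast countIn_le_self A N) (Nat.cast_nonneg N)

lemma upperDensity_le {A : Set ℕ} {d : ℝ} (h : ∀ N, (countIn A N : ℝ) / N ≤ d) :
    upperDensity A ≤ d :=
  limsup_le_of_le (isCoboundedUnder_le_of_le atTop (countIn_div_nonneg A))
    (Eventually.of_forall h)

lemma le_upperDensity {A : Set ℕ} {φ : ℕ → ℕ} {l : ℕ → ℝ} {d : ℝ}
    (hφ : Tendsto φ atTop atTop) (hl : Tendsto l atTop (𝓝 d))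
    (h : ∀ᶠ n in atTop, l n ≤ countIn A (φ n) / φ n) :
    d ≤ upperDensity A := by
  have hbdd (ψ : ℕ → ℕ) :
      IsBoundedUnder (· ≤ ·) atTop fun i => (countIn A (ψ i) : ℝ) / ψ i :=
    isBoundedUnder_of ⟨1, fun i => countIn_div_le_one A (ψ i)⟩
  calc d = limsup l atTop := hl.limsup_eq.symm
    _ ≤ limsup ((fun N => (countIn A N : ℝ) / N) ∘ φ) atTop :=
        limsup_le_limsup h hl.isCoboundedUnder_le (hbdd φ)
    _ ≤ upperDensity A :=
        hφ.limsup_comp_le_limsup (isCoboundedUnder_le_of_le _ (countIn_div_nonneg A)) (hbdd id)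

def fourPowBlocks : Set ℕ := {m | ∃ k, 1 ≤ k ∧ 4 ^ k ≤ m ∧ m < 2 * 4 ^ k}

lemma three_mul_sum_four_pow_add_four (n : ℕ) : 3 * ∑ k ∈ Icc 1 n, 4 ^ k + 4 = 4 ^ (n + 1) := by
  induction n with
  | zero => simp
  | succ n ih => rw [sum_Icc_succ_top (by omega), pow_succ 4 (n + 1)]; omega

lemma countIn_fourPowBlocks_le_sum (N : ℕ) :
    countIn fourPowBlocks N ≤ ∑ k ∈ Icc 1 (Nat.log 4 N), (min (N + 1) (2 * 4 ^ k) - 4 ^ k) := by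
  have hcover : (Icc 1 N).filter (· ∈ fourPowBlocks) ⊆
      (Icc 1 (Nat.log 4 N)).biUnion fun k => Ico (4 ^ k) (min (N + 1) (2 * 4 ^ k)) := by
    intro m hm
    obtain ⟨hmIcc, k, hk, hkm, hmk⟩ := mem_filter.1 hm
    have hmN : m ≤ N := (mem_Icc.1 hmIcc).2
    have hkN : 4 ^ k ≤ N := hkm.trans hmN
    refine mem_biUnion.2 ⟨k, mem_Icc.2 ⟨hk, Nat.le_log_of_pow_le (by norm_num) hkN⟩, ?_⟩
    simp only [mem_Ico, lt_min_iff]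
    exact ⟨hkm, by omega, hmk⟩
  simpa only [countIn, Nat.card_Ico] using (card_le_card hcover).trans card_biUnion_le

lemma three_mul_countIn_fourPowBlocks_le (N : ℕ) : 3 * countIn fourPowBlocks N ≤ 2 * N := by
  rcases lt_or_ge N 4 with hN | hN
  · have := countIn_fourPowBlocks_le_sum N
    rw [Nat.log_eq_zero_iff.2 (Or.inl hN)] at this
    simp_all
  obtain ⟨n, hn⟩ : ∃ n, Nat.log 4 N = n + 1 :=
    Nat.exists_eq_add_one.2 (Nat.log_pos (by norm_num) hN)
  have hcount := countIn_fourPowBlocks_le_sum N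
  rw [hn, sum_Icc_succ_top (by omega)] at hcount
  have hlower : ∑ k ∈ Icc 1 n, (min (N + 1) (2 * 4 ^ k) - 4 ^ k) ≤ ∑ k ∈ Icc 1 n, 4 ^ k :=
    sum_le_sum fun k _ => by omega
  have hgeom := three_mul_sum_four_pow_add_four n
  have hpow : 4 ^ (n + 1) ≤ N := hn ▸ Nat.pow_log_le_self 4 (by omega)
  omega

lemma upperDensity_le_two_thirds_of_subset {A : Set ℕ} (hA : A ⊆ fourPowBlocks) :
    upperDensity A ≤ 2 / 3 := by
  refine upperDensity_le fun N => div_le_of_le_mul₀ N.cast_nonneg (by norm_num) ?_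
  have : 3 * countIn A N ≤ 2 * N :=
    (Nat.mul_le_mul_left 3 (countIn_mono hA N)).trans (three_mul_countIn_fourPowBlocks_le N)
  have : (3 * countIn A N : ℝ) ≤ 2 * N := by exact_mod_cast this
  linarith

def thinFourPowBlocks : Set ℕ :=
  {m : ℕ | ∃ n : ℕ, 1 ≤ n ∧ 4 ^ n ≤ m ∧ (m : ℝ) < (2 - 1 / n) * 4 ^ n}

noncomputable def thinBlock (k : ℕ) : Finset ℕ := Ico (4 ^ k) ⌈(2 - 1 / k : ℝ) * 4 ^ k⌉₊

lemma mem_thinBlock {k m : ℕ} : m ∈ thinBlock k ↔ 4 ^ k ≤ m ∧ (m : ℝ) < (2 - 1 / k) * 4 ^ k := by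
  rw [thinBlock, mem_Ico, Nat.lt_ceil]

lemma thinBlock_subset_Ico (k : ℕ) : thinBlock k ⊆ Ico (4 ^ k) (2 * 4 ^ k) := by
  refine Ico_subset_Ico_right (Nat.ceil_le.2 ?_)
  push_cast
  gcongr
  exact sub_le_self 2 (by positivity)

lemma card_thinBlock (k : ℕ) : (1 - 1 / k : ℝ) * 4 ^ k ≤ (thinBlock k).card := by
  set x : ℝ := (2 - 1 / k) * 4 ^ k
  have hx : (4 : ℝ) ^ k ≤ x := by
    have : 1 / (k : ℝ) ≤ 1 := by simpa only [one_div] using Nat.cast_inv_le_one k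
    exact le_mul_of_one_le_left (by positivity) (by linarith)
  have hle : 4 ^ k ≤ ⌈x⌉₊ := by exact_mod_cast hx.trans (Nat.le_ceil x)
  rw [thinBlock, Nat.card_Ico, Nat.cast_sub hle]
  push_cast
  linarith [Nat.le_ceil x]

lemma thinFourPowBlocks_subset : thinFourPowBlocks ⊆ fourPowBlocks := by
  rintro m ⟨k, hk, hm⟩
  exact ⟨k, hk, mem_Ico.1 (thinBlock_subset_Ico k (mem_thinBlock.2 hm))⟩

lemma disjoint_Ico_four_pow {j k : ℕ} (hjk : j ≠ k) :
    Disjoint (Ico (4 ^ j) (2 * 4 ^ j)) (Ico (4 ^ k) (2 * 4 ^ k)) := by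
  wlog hlt : j < k generalizing j k
  · exact (this hjk.symm (by omega)).symm
  have : 4 ^ (j + 1) ≤ 4 ^ k := Nat.pow_le_pow_right (by norm_num) hlt
  exact disjoint_left.2 fun m hj hk => by simp only [mem_Ico] at hj hk; omega

lemma sum_card_thinBlock_le_countIn (n : ℕ) :
    ∑ k ∈ Icc 1 n, (thinBlock k).card ≤ countIn thinFourPowBlocks (2 * 4 ^ n) := by
  rw [← card_biUnion fun j _ k _ hjk =>
    (disjoint_Ico_four_pow hjk).mono (thinBlock_subset_Ico j) (thinBlock_subset_Ico k)]
  refine card_le_countIn (fun m hm => ?_) fun m hm => ?_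
  · obtain ⟨k, hk, hmk⟩ := mem_biUnion.1 hm
    exact ⟨k, (mem_Icc.1 hk).1, mem_thinBlock.1 hmk⟩
  · obtain ⟨k, hk, hmk⟩ := mem_biUnion.1 hm
    have hkn : 4 ^ k ≤ 4 ^ n := Nat.pow_le_pow_right (by norm_num) (mem_Icc.1 hk).2
    have := Nat.one_le_pow k 4 (by norm_num)
    have := mem_Ico.1 (thinBlock_subset_Ico k hmk)
    exact mem_Icc.2 ⟨by omega, by omega⟩

lemma two_thirds_sub_mul_le_sum (n : ℕ) (hn : 1 ≤ n) :
    (2 / 3 - 2 / n : ℝ) * (2 * 4 ^ n) ≤ ∑ k ∈ Icc 1 n, (1 - 1 / k : ℝ) * 4 ^ k := by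
  induction n, hn using Nat.le_induction with
  | base => norm_num
  | succ n hn ih =>
    rw [sum_Icc_succ_top (by omega)]
    have hn' : (1 : ℝ) ≤ n := by exact_mod_cast hn
    have step : (2 / 3 - 2 / (n + 1 : ℝ)) * (2 * 4 ^ (n + 1))
        ≤ (2 / 3 - 2 / n : ℝ) * (2 * 4 ^ n) + (1 - 1 / (n + 1 : ℝ)) * 4 ^ (n + 1) := by
      rw [pow_succ]
      field_simp
      nlinarith [pow_pos (by norm_num : (0 : ℝ) < 4) n]
    push_cast
    linarith

lemma two_thirds_le_upperDensity_thinFourPowBlocks : 2 / 3 ≤ upperDensity thinFourPowBlocks := by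
  have hφ : Tendsto (fun n : ℕ => 2 * 4 ^ n) atTop atTop :=
    tendsto_atTop_mono (fun n => show n ≤ 2 * 4 ^ n from
      (Nat.lt_pow_self (by norm_num : 1 < 4)).le.trans (by omega)) tendsto_id
  have hl : Tendsto (fun n : ℕ => (2 / 3 - 2 / n : ℝ)) atTop (𝓝 (2 / 3)) := by
    simpa using tendsto_const_nhds.sub (tendsto_const_div_atTop_nhds_zero_nat (2 : ℝ))
  refine le_upperDensity hφ hl ((eventually_ge_atTop 1).mono fun n hn => ?_)
  rw [le_div_iff₀ (by positivity)]
  calc (2 / 3 - 2 / n : ℝ) * ((2 * 4 ^ n : ℕ) : ℝ)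
      ≤ ∑ k ∈ Icc 1 n, (1 - 1 / k : ℝ) * 4 ^ k := by
        push_cast
        exact two_thirds_sub_mul_le_sum n hn
    _ ≤ ∑ k ∈ Icc 1 n, ((thinBlock k).card : ℝ) := sum_le_sum fun k _ => card_thinBlock k
    _ ≤ countIn thinFourPowBlocks (2 * 4 ^ n) := by
        exact_mod_cast sum_card_thinBlock_le_countIn n

theorem upperDensity_example_two_thirds :
    upperDensity {m : ℕ | ∃ n : ℕ, 1 ≤ n ∧ 4 ^ n ≤ m ∧ (m : ℝ) < (2 - 1 / n) * 4 ^ n}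
      = 2 / 3 :=
  le_antisymm (upperDensity_le_two_thirds_of_subset thinFourPowBlocks_subset)
    two_thirds_le_upperDensity_thinFourPowBlocks
end

section
/- Let A = ℕ ∩ ⋃_{n∈ℕ} [4^n, (2 - 1/n)·4^n). Then there is no infinite set B ⊆ ℕ and no t ∈ ℕ such that B + B + t ⊆ A. -/
open Filter
open scoped Classical

/-!
Fix `b₁ ∈ B` and take `b₂ ∈ B` huge. The sums `x = b₁ + b₂ + t ≤ z = 2 b₂ + t ≤ 2 x` must lie in
the same block `[4^n, (2 - 1/n) 4^n)`, since consecutive blocks are separated by a factor larger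
than `2`. Then `z ≥ 2 · 4^n - (2 b₁ + t)` while the block ends `4^n / n` below `2 · 4^n`, so
`4^n < n (2 b₁ + t)`. As `b₂` is huge, `n` is large compared with `2 b₁ + t`, so `4^n < n²`,
which is absurd.
-/

/-- `m ∈ [4^n, (2 - 1/n) 4^n)` with `n ≥ 1`, the upper bound multiplied through by `n`. -/
def InBlock (n m : ℕ) : Prop :=
  1 ≤ n ∧ 4 ^ n ≤ m ∧ n * m + 4 ^ n < 2 * n * 4 ^ n

lemma exists_inBlock {m : ℕ}
    (h : m ∈ {m : ℕ | ∃ n : ℕ, 1 ≤ n ∧ 4 ^ n ≤ m ∧ (m : ℝ) < (2 - 1 / n) * 4 ^ n}) :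
    ∃ n, InBlock n m := by
  obtain ⟨n, hn, hlow, hup⟩ := h
  refine ⟨n, hn, hlow, ?_⟩
  have hn' : (0 : ℝ) < n := by exact_mod_cast hn
  have : (n : ℝ) * m + 4 ^ n < 2 * n * 4 ^ n := by
    calc (n : ℝ) * m + 4 ^ n < n * ((2 - 1 / n) * 4 ^ n) + 4 ^ n := by gcongr
      _ = 2 * n * 4 ^ n := by field_simp; ring
  exact_mod_cast this

namespace InBlock

variable {n n' m m' : ℕ}

lemma lt_two_mul_four_pow (h : InBlock n m) : m < 2 * 4 ^ n := by
  obtain ⟨hn, -, hup⟩ := h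
  exact Nat.lt_of_mul_lt_mul_left (a := n) (by linarith [Nat.zero_le (4 ^ n)])

lemma eq_of_le_of_le_two_mul (hm : InBlock n m) (hm' : InBlock n' m') (hle : m ≤ m')
    (hle' : m' ≤ 2 * m) : n = n' := by
  have hn'n : 4 ^ n' < 4 ^ (n + 1) := by
    rw [pow_succ]; linarith [hm'.2.1, hm.lt_two_mul_four_pow, Nat.zero_le (4 ^ n)]
  have hnn' : 4 ^ n < 4 ^ (n' + 1) := by
    rw [pow_succ]; linarith [hm.2.1, hm'.lt_two_mul_four_pow, Nat.zero_le (4 ^ n')]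
  rw [Nat.pow_lt_pow_iff_right (by norm_num)] at hn'n hnn'
  omega

lemma four_pow_lt_mul {x z k : ℕ} (hx : InBlock n x) (hz : InBlock n z) (h : z + k = 2 * x) :
    4 ^ n < n * k := by
  obtain ⟨-, hlow, -⟩ := hx
  obtain ⟨-, -, hup⟩ := hz
  have : 2 * n * 4 ^ n ≤ n * (z + k) :=
    calc 2 * n * 4 ^ n = n * (2 * 4 ^ n) := by ring
      _ ≤ n * (z + k) := by rw [h]; gcongr
  linarith

end InBlock

lemma mul_self_lt_four_pow (n : ℕ) : n * n < 4 ^ n := by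
  have h := Nat.lt_two_pow_self (n := n)
  calc n * n < 2 ^ n * 2 ^ n := Nat.mul_self_lt_mul_self h
    _ = 4 ^ n := by rw [← mul_pow]; norm_num

theorem no_BBt_in_example :
    ∀ (B : Set ℕ) (t : ℕ), B.Infinite →
      ¬ (∀ b₁ ∈ B, ∀ b₂ ∈ B,
          b₁ + b₂ + t ∈ {m : ℕ | ∃ n : ℕ, 1 ≤ n ∧ 4 ^ n ≤ m ∧ (m : ℝ) < (2 - 1 / n) * 4 ^ n}) := by
  intro B t hB hsub
  obtain ⟨b₁, hb₁⟩ := hB.nonempty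
  obtain ⟨b₂, hb₂, hb₂_big⟩ := hB.exists_gt (b₁ + 4 ^ (2 * b₁ + t))
  have hb₁₂ : b₁ ≤ b₂ := by linarith [Nat.zero_le (4 ^ (2 * b₁ + t))]
  obtain ⟨n, hx⟩ := exists_inBlock (hsub b₁ hb₁ b₂ hb₂)
  obtain ⟨n', hz⟩ := exists_inBlock (hsub b₂ hb₂ b₂ hb₂)
  obtain rfl : n = n' := hx.eq_of_le_of_le_two_mul hz (by omega) (by omega)
  have hsmall : 4 ^ n < n * (2 * b₁ + t) := hx.four_pow_lt_mul hz (by omega)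
  have hlarge : 2 * b₁ + t < n := by
    rw [← Nat.pow_lt_pow_iff_right (show 1 < 4 by norm_num)]
    linarith [hz.lt_two_mul_four_pow]
  have hsq : n * n < n * (2 * b₁ + t) := (mul_self_lt_four_pow n).trans hsmall
  exact (Nat.lt_of_mul_lt_mul_left hsq).not_gt hlarge
end

section
/- Let A = ℕ ∩ ⋃_{n∈ℕ} [4^n, (2 - 1/n)·4^n) and let A' = A ∪ (2ℕ + 1) (A together with all odd numbers). Then the upper density of A' equals 5/6 and there is no infinite set B ⊆ ℕ with B + B ⊆ A'. -/
open Filter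
open scoped Classical

/-!
Every even element of `A ∪ (2ℕ + 1)` lies in `A`, and `A ⊆ ⋃ₖ [4ᵏ, 2·4ᵏ)`. Up to `N ∈ [4ⁿ, 4ⁿ⁺¹)`
the odd numbers contribute `N/2` and the blocks below `4ⁿ` at most `4ⁿ/6` even numbers, so the
counting ratio peaks near `N = 2·4ⁿ` at `(4ⁿ + 4ⁿ/6 + 4ⁿ/2) / (2·4ⁿ) = 5/6`. It gets within
`O(1/n)` of this value there, because the `k`-th block of `A` misses only `4ᵏ/k` points of
`[4ᵏ, 2·4ᵏ)`.

An infinite `B` has infinitely many elements of one parity, so for such `b₁ < b₂` both `b₁ + b₂`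
and `2b₂` are even, hence lie in `A`, and then in the same block `[4ⁿ, (2 - 1/n)4ⁿ)`. This forces
`b₂ < 2n·b₁` while `4ⁿ ≤ b₁ + b₂`, which bounds `b₂` in terms of `b₁`.
-/

open Finset

theorem card_filter_even_Ico {a : ℕ} (ha : Even a) (b : ℕ) :
    #{m ∈ Ico a b | Even m} = (b - a + 1) / 2 := by
  rw [Nat.even_iff] at ha
  have : {m ∈ Ico a b | Even m} = (Ico (a / 2) ((b + 1) / 2)).image (2 * ·) := by
    ext m
    simp only [mem_filter, mem_Ico, mem_image, Nat.even_iff]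
    constructor
    · rintro ⟨⟨h₁, h₂⟩, h₃⟩; exact ⟨m / 2, ⟨by omega, by omega⟩, by omega⟩
    · rintro ⟨k, ⟨h₁, h₂⟩, rfl⟩; omega
  rw [this, card_image_of_injective _ (fun x y h => by simpa using h), Nat.card_Ico]
  omega

theorem card_filter_odd_Icc (N : ℕ) : #{m ∈ Icc 1 N | m % 2 = 1} = (N + 1) / 2 := by
  have : {m ∈ Icc 1 N | m % 2 = 1} = (range ((N + 1) / 2)).image (2 * · + 1) := by
    ext m
    simp only [mem_filter, mem_Icc, mem_image, mem_range]
    constructor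
    · rintro ⟨⟨h₁, h₂⟩, h₃⟩; exact ⟨m / 2, by omega, by omega⟩
    · rintro ⟨k, hk, rfl⟩; omega
  rw [this, card_image_of_injective _ (fun x y h => by simpa using h), card_range]

theorem countIn_union_odd (S : Set ℕ) (N : ℕ) :
    countIn (S ∪ {m | m % 2 = 1}) N = (N + 1) / 2 + countIn {m ∈ S | Even m} N := by
  rw [countIn, countIn, ← card_filter_odd_Icc, ← card_union_of_disjoint]
  · congr 1
    ext m
    simp only [mem_filter, mem_union, Set.mem_union, Set.mem_ofPred_eq, Nat.even_iff]
    rcases Nat.mod_two_eq_zero_or_one m with h | h <;> simp [h]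
  · rw [disjoint_left]
    intro m h₁ h₂
    simp only [mem_filter, Set.mem_ofPred_eq, Nat.even_iff] at h₁ h₂
    omega

theorem three_mul_sum_Ico_four_pow {n : ℕ} (hn : 1 ≤ n) :
    3 * ∑ k ∈ Ico 1 n, 4 ^ k + 4 = 4 ^ n := by
  induction n, hn using Nat.le_induction with
  | base => simp
  | succ n hn ih => rw [sum_Ico_succ_top hn, mul_add, add_right_comm, ih, pow_succ]; ring

theorem mul_sum_Ico_four_pow_div_le {n : ℕ} (hn : 1 ≤ n) :
    n * ∑ k ∈ Ico 1 (n + 1), 4 ^ k / k ≤ 2 * 4 ^ n := by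
  induction n, hn using Nat.le_induction with
  | base => simp
  | succ n hn ih =>
    rw [sum_Ico_succ_top (by omega), mul_add, pow_succ]
    set S := ∑ k ∈ Ico 1 (n + 1), 4 ^ k / k
    have hS : (n + 1) * S ≤ 2 * (n * S) := by nlinarith
    have := Nat.mul_div_le (4 ^ n * 4) (n + 1)
    omega

theorem eq_of_mem_Ico_four_pow {x y n k : ℕ} (hx : x ∈ Ico (4 ^ n) (2 * 4 ^ n))
    (hy : y ∈ Ico (4 ^ k) (2 * 4 ^ k)) (hxy : x ≤ y) (hyx : y < 2 * x) : n = k := by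
  rw [mem_Ico] at hx hy
  by_contra hne
  rcases Nat.lt_or_gt_of_ne hne with h | h
  · have : 4 ^ (n + 1) ≤ 4 ^ k := Nat.pow_le_pow_right (by norm_num) h
    rw [pow_succ] at this
    omega
  · have : 4 ^ (k + 1) ≤ 4 ^ n := Nat.pow_le_pow_right (by norm_num) h
    rw [pow_succ] at this
    omega

def fourBlocks : Set ℕ := {m : ℕ | ∃ n : ℕ, 1 ≤ n ∧ 4 ^ n ≤ m ∧ (m : ℝ) < (2 - 1 / n) * 4 ^ n}

theorem mem_fourBlocks_iff {m : ℕ} :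
    m ∈ fourBlocks ↔ ∃ n, 1 ≤ n ∧ 4 ^ n ≤ m ∧ m * n + 4 ^ n < 2 * n * 4 ^ n := by
  refine exists_congr fun n => and_congr_right fun hn => and_congr_right fun _ => ?_
  have hn' : (0 : ℝ) < n := by exact_mod_cast hn
  rw [← Nat.cast_lt (α := ℝ), show (2 - 1 / (n : ℝ)) * 4 ^ n = (2 * n * 4 ^ n - 4 ^ n) / n by
    field_simp, lt_div_iff₀ hn']
  push_cast
  constructor <;> intro h <;> linarith

theorem lt_two_mul_four_pow {m n : ℕ} (h : m * n + 4 ^ n < 2 * n * 4 ^ n) : m < 2 * 4 ^ n := by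
  by_contra! hm
  nlinarith [Nat.mul_le_mul_right n hm, Nat.one_le_pow n 4 (by norm_num)]

theorem mem_Ico_of_mem_fourBlocks {m : ℕ} (hm : m ∈ fourBlocks) :
    ∃ n, 1 ≤ n ∧ m ∈ Ico (4 ^ n) (2 * 4 ^ n) := by
  obtain ⟨n, hn, h₁, h₂⟩ := mem_fourBlocks_iff.1 hm
  exact ⟨n, hn, mem_Ico.2 ⟨h₁, lt_two_mul_four_pow h₂⟩⟩

theorem mem_fourBlocks_of_lt {m n : ℕ} (hn : 1 ≤ n) (h₁ : 4 ^ n ≤ m)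
    (h₂ : m + 4 ^ n / n + 1 < 2 * 4 ^ n) : m ∈ fourBlocks := by
  refine mem_fourBlocks_iff.2 ⟨n, hn, h₁, ?_⟩
  have := Nat.lt_mul_div_succ (4 ^ n) (show 0 < n by omega)
  nlinarith

theorem four_pow_mod_two {k : ℕ} (hk : 1 ≤ k) : 4 ^ k % 2 = 0 :=
  Nat.even_iff.1 ((Nat.even_pow' (by omega)).2 (by decide))

theorem six_mul_countIn_le (N : ℕ) :
    6 * countIn (fourBlocks ∪ {m | m % 2 = 1}) N ≤ 5 * N + 4 := by
  rw [countIn_union_odd]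
  set n := Nat.log 4 N
  have hNn : N < 4 ^ (n + 1) := Nat.lt_pow_succ_log_self (by norm_num) N
  set block := fun k => {m ∈ Ico (4 ^ k) (min (N + 1) (2 * 4 ^ k)) | Even m}
  have hcount : countIn {m ∈ fourBlocks | Even m} N ≤ ∑ k ∈ Ico 1 (n + 1), #(block k) := by
    refine (card_le_card fun m hm => ?_).trans card_biUnion_le
    simp only [mem_filter, mem_Icc, Set.mem_ofPred_eq] at hm
    obtain ⟨⟨-, hmN⟩, hmA, hme⟩ := hm
    obtain ⟨k, hk, hmk⟩ := mem_Ico_of_mem_fourBlocks hmA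
    rw [mem_Ico] at hmk
    have hkn : k < n + 1 := (pow_lt_pow_iff_right₀ (by norm_num : 1 < 4)).1 (by omega)
    simp only [block, mem_biUnion, mem_filter, mem_Ico]
    exact ⟨k, ⟨hk, hkn⟩, ⟨hmk.1, lt_min (by omega) hmk.2⟩, hme⟩
  obtain hn | hn : n = 0 ∨ 1 ≤ n := by omega
  · rw [hn] at hcount
    simp only [zero_add, Ico_self, sum_empty] at hcount
    omega
  have hnN : 4 ^ n ≤ N := Nat.pow_log_le_self 4 (by rintro rfl; simp [n] at hn)
  have hblock : ∀ k, 1 ≤ k → 2 * #(block k) ≤ min (N + 1) (2 * 4 ^ k) - 4 ^ k + 1 := by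
    intro k hk
    have := four_pow_mod_two hk
    rw [card_filter_even_Ico (Nat.even_iff.2 this)]
    omega
  have hfull : 2 * ∑ k ∈ Ico 1 n, #(block k) ≤ ∑ k ∈ Ico 1 n, 4 ^ k := by
    rw [mul_sum]
    refine sum_le_sum fun k hk => ?_
    have := hblock k (mem_Ico.1 hk).1
    have := four_pow_mod_two (mem_Ico.1 hk).1
    omega
  rw [sum_Ico_succ_top hn] at hcount
  have := hblock n hn
  have := three_mul_sum_Ico_four_pow hn
  omega

theorem sq_le_four_pow (n : ℕ) : n ^ 2 ≤ 4 ^ n := by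
  rw [show (4 : ℕ) ^ n = (2 ^ n) ^ 2 by rw [← pow_mul, mul_comm, pow_mul]; norm_num]
  exact Nat.pow_le_pow_left Nat.lt_two_pow_self.le 2

theorem countIn_two_mul_four_pow_ge {n : ℕ} (hn : 1 ≤ n) :
    5 * n * (2 * 4 ^ n) ≤
      6 * n * countIn (fourBlocks ∪ {m | m % 2 = 1}) (2 * 4 ^ n) + 7 * (2 * 4 ^ n) := by
  rw [countIn_union_odd, show (2 * 4 ^ n + 1) / 2 = 4 ^ n by omega]
  set block := fun k => {m ∈ Ico (4 ^ k) (2 * 4 ^ k - (4 ^ k / k + 1)) | Even m}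
  have hblock_sub : ∀ k, block k ⊆ Ico (4 ^ k) (2 * 4 ^ k) := fun k m hm => by
    simp only [block, mem_filter, mem_Ico] at hm ⊢
    have := Nat.zero_le (4 ^ k / k)
    omega
  have hdisj : (Set.univ : Set ℕ).PairwiseDisjoint block := by
    intro k _ l _ hkl
    refine disjoint_left.2 fun m hk hl => hkl ?_
    have := Nat.one_le_pow k 4 (by norm_num)
    have hk := hblock_sub k hk
    exact eq_of_mem_Ico_four_pow hk (hblock_sub l hl) le_rfl (by rw [mem_Ico] at hk; omega)
  have hcount : ∑ k ∈ Ico 1 (n + 1), #(block k) ≤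
      countIn {m ∈ fourBlocks | Even m} (2 * 4 ^ n) := by
    rw [← card_biUnion (hdisj.subset (Set.subset_univ _))]
    refine card_le_card fun m hm => ?_
    simp only [block, mem_biUnion, mem_filter, mem_Ico] at hm
    obtain ⟨k, ⟨hk, hkn⟩, ⟨hkm, hmk⟩, hme⟩ := hm
    have : 4 ^ k ≤ 4 ^ n := Nat.pow_le_pow_right (by norm_num) (by omega)
    have := Nat.one_le_pow k 4 (by norm_num)
    have := Nat.zero_le (4 ^ k / k)
    simp only [mem_filter, mem_Icc, Set.mem_ofPred_eq]
    exact ⟨⟨by omega, by omega⟩, mem_fourBlocks_of_lt hk hkm (by omega), hme⟩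
  have hblock : ∀ k ∈ Ico 1 (n + 1), 4 ^ k ≤ 2 * #(block k) + (4 ^ k / k + 1) := by
    intro k hk
    have heven := four_pow_mod_two (mem_Ico.1 hk).1
    have := Nat.div_le_self (4 ^ k) k
    rw [card_filter_even_Ico (Nat.even_iff.2 heven)]
    omega
  have hsum := sum_le_sum hblock
  rw [sum_add_distrib, sum_add_distrib, ← mul_sum, sum_const, Nat.card_Ico,
    smul_eq_mul, mul_one, Nat.add_sub_cancel] at hsum
  have hgeom := three_mul_sum_Ico_four_pow (show 1 ≤ n + 1 by omega)
  rw [pow_succ] at hgeom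
  have h6 : 4 * 4 ^ n ≤ 6 * countIn {m ∈ fourBlocks | Even m} (2 * 4 ^ n) +
      3 * ∑ k ∈ Ico 1 (n + 1), 4 ^ k / k + 3 * n + 4 := by
    omega
  nlinarith [Nat.mul_le_mul_left n h6, mul_sum_Ico_four_pow_div_le hn, sq_le_four_pow n]

theorem limsup_eq_of_le_of_le_comp {u v w : ℕ → ℝ} {φ : ℕ → ℕ} {L : ℝ}
    (hu : IsBoundedUnder (· ≥ ·) atTop u) (huv : ∀ᶠ N in atTop, u N ≤ v N)
    (hv : Tendsto v atTop (nhds L)) (hφ : Tendsto φ atTop atTop)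
    (hwu : ∀ᶠ n in atTop, w n ≤ u (φ n)) (hw : Tendsto w atTop (nhds L)) :
    limsup u atTop = L := by
  refine le_antisymm ?_ ?_
  · exact (limsup_le_limsup huv hu.isCoboundedUnder_le hv.isBoundedUnder_le).trans hv.limsup_eq.le
  · have hcomp : Tendsto (u ∘ φ) atTop (nhds L) :=
      tendsto_of_tendsto_of_tendsto_of_le_of_le' hw (hv.comp hφ) hwu (hφ.eventually huv)
    rw [← hcomp.limsup_eq]
    exact hφ.limsup_comp_le_limsup hcomp.isBoundedUnder_ge.isCoboundedUnder_le
      (hv.isBoundedUnder_le.mono_le huv)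

theorem upperDensity_fourBlocks_union_odd :
    upperDensity (fourBlocks ∪ {m | m % 2 = 1}) = 5 / 6 := by
  refine limsup_eq_of_le_of_le_comp (v := fun N => 5 / 6 + 1 / N) (φ := fun n => 2 * 4 ^ n)
    (w := fun n => 5 / 6 - 7 / 6 / n) ?_ ?_ ?_ ?_ ?_ ?_
  · exact isBoundedUnder_of_eventually_ge (Eventually.of_forall fun N => by positivity)
  · filter_upwards [eventually_gt_atTop 0] with N hN
    have hN' : (0 : ℝ) < N := by exact_mod_cast hN
    have key : (6 * countIn (fourBlocks ∪ {m | m % 2 = 1}) N : ℝ) ≤ 5 * N + 4 := by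
      exact_mod_cast six_mul_countIn_le N
    rw [div_le_iff₀ hN', add_mul, div_mul_cancel₀ _ hN'.ne']
    linarith
  · simpa using (tendsto_const_nhds (x := (5 / 6 : ℝ))).add tendsto_one_div_atTop_nhds_zero_nat
  · refine tendsto_atTop_mono (f := fun n => n) (fun n => ?_) tendsto_id
    exact (Nat.lt_pow_self (by norm_num : 1 < 4)).le.trans (by omega)
  · filter_upwards [eventually_ge_atTop 1] with n hn
    have hn' : (0 : ℝ) < n := by exact_mod_cast hn
    have hN' : (0 : ℝ) < 2 * 4 ^ n := by positivity
    have key : (5 * n * (2 * 4 ^ n) : ℝ) ≤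
        6 * n * countIn (fourBlocks ∪ {m | m % 2 = 1}) (2 * 4 ^ n) + 7 * (2 * 4 ^ n) := by
      exact_mod_cast countIn_two_mul_four_pow_ge hn
    push_cast
    rw [le_div_iff₀ hN', show (5 / 6 - 7 / 6 / n : ℝ) * (2 * 4 ^ n) =
      (5 * n * (2 * 4 ^ n) - 7 * (2 * 4 ^ n)) / (6 * n) by field_simp, div_le_iff₀ (by positivity)]
    linarith
  · simpa using tendsto_const_nhds.sub (tendsto_const_div_atTop_nhds_zero_nat (7 / 6 : ℝ))

theorem lt_six_mul_sq_of_add_mem_fourBlocks {b₁ b₂ : ℕ} (hb₁ : 0 < b₁)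
    (h₁ : b₁ + b₂ ∈ fourBlocks) (h₂ : b₂ + b₂ ∈ fourBlocks) : b₂ < 6 * b₁ ^ 2 := by
  by_contra! hb
  have hb₁₂ : b₁ ≤ b₂ := by nlinarith
  obtain ⟨n, hn, hc₁, hc₂⟩ := mem_fourBlocks_iff.1 h₁
  obtain ⟨k, -, hd₁, hd₂⟩ := mem_fourBlocks_iff.1 h₂
  obtain rfl : n = k := eq_of_mem_Ico_four_pow (mem_Ico.2 ⟨hc₁, lt_two_mul_four_pow hc₂⟩)
    (mem_Ico.2 ⟨hd₁, lt_two_mul_four_pow hd₂⟩) (by omega) (by omega)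
  have hb₂ : b₂ < 2 * n * b₁ := by nlinarith
  have hn₁ : n < 3 * b₁ := by nlinarith [sq_le_four_pow n]
  nlinarith

theorem not_add_mem_of_infinite {B : Set ℕ} (hB : B.Infinite) :
    ¬ ∀ b₁ ∈ B, ∀ b₂ ∈ B, b₁ + b₂ ∈ fourBlocks ∪ {m | m % 2 = 1} := by
  intro hsum
  obtain ⟨r, hr⟩ : ∃ r, (B ∩ (· % 2) ⁻¹' {r}).Infinite := by
    by_contra! hfin
    refine hB (Set.Finite.of_finite_fibers (· % 2) ((Set.finite_Iio 2).subset ?_)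
      fun r _ => hfin r)
    rintro _ ⟨m, -, rfl⟩
    exact Nat.mod_lt m two_pos
  obtain ⟨b₁, ⟨hb₁, hr₁⟩, hb₁pos⟩ := hr.exists_gt 0
  obtain ⟨b₂, ⟨hb₂, hr₂⟩, hb₂large⟩ := hr.exists_gt (6 * b₁ ^ 2)
  have mem_of_even : ∀ b ∈ B, b % 2 = r → b₂ + b ∈ fourBlocks := fun b hb hbr =>
    (hsum b₂ hb₂ b hb).resolve_right fun h => by
      simp only [Set.mem_preimage, Set.mem_singleton_iff, Set.mem_ofPred_eq] at hr₂ hbr h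
      omega
  exact (lt_six_mul_sq_of_add_mem_fourBlocks hb₁pos (add_comm b₁ b₂ ▸ mem_of_even b₁ hb₁ hr₁)
    (mem_of_even b₂ hb₂ hr₂)).not_ge hb₂large.le

theorem example_five_sixths :
    upperDensity ({m : ℕ | ∃ n : ℕ, 1 ≤ n ∧ 4 ^ n ≤ m ∧ (m : ℝ) < (2 - 1 / n) * 4 ^ n}
        ∪ {m : ℕ | m % 2 = 1}) = 5 / 6 ∧
    ∀ B : Set ℕ, B.Infinite →
      ¬ (∀ b₁ ∈ B, ∀ b₂ ∈ B,
          b₁ + b₂ ∈ ({m : ℕ | ∃ n : ℕ, 1 ≤ n ∧ 4 ^ n ≤ m ∧ (m : ℝ) < (2 - 1 / n) * 4 ^ n}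
            ∪ {m : ℕ | m % 2 = 1})) :=
  ⟨upperDensity_fourBlocks_union_odd, fun _ => not_add_mem_of_infinite⟩
end

section
/- Let A₁ = ℕ ∩ ⋃_{n∈ℕ} [4^n, (2 - 1/n)·4^n) and A₂ = ℕ ∩ ⋃_{n∈ℕ} [(2 + 1/n)·4^n, 4^{n+1}). Then the set ℕ \ (A₁ ∪ A₂) has natural density zero. -/
/-!
An integer `m ≥ 4` outside `A₁ ∪ A₂` lies, for `n = ⌊log₄ m⌋`, in the window
`[(2 - 1/n) 4ⁿ, (2 + 1/n) 4ⁿ]`, which holds about `2 · 4ⁿ / n` integers. Up to `N` these windows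
contain `O(∑_{n ≤ log₄ N} 4ⁿ / n) = O(4^{log₄ N} / log₄ N) = O(N / log N)` integers.
-/

open Filter
open scoped Classical

open Finset

theorem sum_Icc_pow_div_le {b : ℝ} (hb : 3 ≤ b) {k : ℕ} (hk : 1 ≤ k) :
    ∑ n ∈ Icc 1 k, b ^ n / n ≤ b ^ (k + 1) / k := by
  induction k, hk using Nat.le_induction with
  | base =>
    simp only [Icc_self, sum_singleton, Nat.cast_one, div_one, pow_one]
    exact le_self_pow₀ (by linarith) (by norm_num)
  | succ k hk ih =>
    have hk' : (1 : ℝ) ≤ k := by exact_mod_cast hk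
    have halve : b ^ (k + 1) / k ≤ 2 * (b ^ (k + 1) / (k + 1)) := by
      rw [mul_div_assoc', div_le_div_iff₀ (by positivity) (by positivity)]
      nlinarith [pow_pos (show 0 < b by linarith) (k + 1)]
    rw [sum_Icc_succ_top (by omega)]
    calc ∑ n ∈ Icc 1 k, b ^ n / n + b ^ (k + 1) / ↑(k + 1)
        ≤ 3 * (b ^ (k + 1) / (k + 1)) := by push_cast; linarith
      _ ≤ b * (b ^ (k + 1) / (k + 1)) := by gcongr
      _ = b ^ (k + 1 + 1) / ↑(k + 1) := by push_cast; ring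

theorem card_Icc_ceil_floor_le {a b : ℝ} (hb : 0 ≤ b) (hab : a ≤ b + 1) :
    ((Icc ⌈a⌉₊ ⌊b⌋₊).card : ℝ) ≤ b - a + 1 := by
  rcases le_or_gt ⌈a⌉₊ (⌊b⌋₊ + 1) with h | h
  · rw [Nat.card_Icc, Nat.cast_sub h]
    push_cast
    linarith [Nat.le_ceil a, Nat.floor_le hb]
  · rw [Icc_eq_empty (by omega)]
    simp only [card_empty, Nat.cast_zero]
    linarith

theorem one_le_pow_div_self {b n : ℕ} (hb : 1 < b) (hn : 1 ≤ n) : (1 : ℝ) ≤ b ^ n / n := by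
  rw [le_div_iff₀ (by exact_mod_cast hn), one_mul]
  exact_mod_cast (Nat.lt_pow_self hb).le

theorem Nat.tendsto_log_atTop {b : ℕ} (hb : 1 < b) : Tendsto (Nat.log b) atTop atTop :=
  Monotone.tendsto_atTop_atTop (fun _ _ => Nat.log_mono_right)
    fun n => ⟨b ^ n, (Nat.log_pow hb n).ge⟩

def gapSet : Set ℕ :=
  ({m : ℕ | ∃ n : ℕ, 1 ≤ n ∧ 4 ^ n ≤ m ∧ (m : ℝ) < (2 - 1 / n) * 4 ^ n}
    ∪ {m : ℕ | ∃ n : ℕ, 1 ≤ n ∧ (2 + 1 / n) * 4 ^ n ≤ (m : ℝ) ∧ m < 4 ^ (n + 1)})ᶜ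

noncomputable def window (n : ℕ) : Finset ℕ :=
  Icc ⌈(2 - 1 / n : ℝ) * 4 ^ n⌉₊ ⌊(2 + 1 / n : ℝ) * 4 ^ n⌋₊

theorem card_window_le {n : ℕ} (hn : 1 ≤ n) : ((window n).card : ℝ) ≤ 3 * (4 ^ n / n) := by
  have hone : (1 : ℝ) ≤ 4 ^ n / n := by
    exact_mod_cast one_le_pow_div_self (b := 4) (by norm_num) hn
  have hspread : (0 : ℝ) ≤ 1 / n * 4 ^ n := by positivity
  calc ((window n).card : ℝ)
      ≤ (2 + 1 / n) * 4 ^ n - (2 - 1 / n) * 4 ^ n + 1 :=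
        card_Icc_ceil_floor_le (by positivity) (by linarith)
    _ = 2 * (4 ^ n / n) + 1 := by ring
    _ ≤ 3 * (4 ^ n / n) := by linarith

theorem mem_window_log_of_mem_gapSet {m : ℕ} (hm : 4 ≤ m) (hgap : m ∈ gapSet) :
    1 ≤ Nat.log 4 m ∧ m ∈ window (Nat.log 4 m) := by
  set n := Nat.log 4 m
  have hn : 1 ≤ n := Nat.log_pos (by norm_num) hm
  simp only [gapSet, Set.mem_compl_iff, Set.mem_union, Set.mem_ofPred_eq, not_or, not_exists,
    not_and, not_lt] at hgap
  refine ⟨hn, mem_Icc.mpr ⟨Nat.ceil_le.mpr ?_, Nat.le_floor ?_⟩⟩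
  · exact hgap.1 n hn (Nat.pow_log_le_self 4 (by omega))
  · exact not_lt.mp fun h ↦ (Nat.lt_pow_succ_log_self (by norm_num) m).not_ge (hgap.2 n hn h.le)

theorem filter_mem_gapSet_subset (N : ℕ) :
    (Icc 1 N).filter (· ∈ gapSet) ⊆ Icc 1 3 ∪ (Icc 1 (Nat.log 4 N)).biUnion window := by
  intro m hm
  obtain ⟨hmN, hgap⟩ := mem_filter.mp hm
  rcases le_or_gt m 3 with hm3 | hm4
  · exact mem_union_left _ (mem_Icc.mpr ⟨(mem_Icc.mp hmN).1, hm3⟩)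
  · obtain ⟨hlog, hwin⟩ := mem_window_log_of_mem_gapSet hm4 hgap
    exact mem_union_right _ (mem_biUnion.mpr
      ⟨Nat.log 4 m, mem_Icc.mpr ⟨hlog, Nat.log_mono_right (mem_Icc.mp hmN).2⟩, hwin⟩)

theorem countIn_gapSet_le {N : ℕ} (hN : 4 ≤ N) :
    (countIn gapSet N : ℝ) ≤ 15 * N / Nat.log 4 N := by
  set K := Nat.log 4 N
  have hK : 1 ≤ K := Nat.log_pos (by norm_num) hN
  have hcount : countIn gapSet N ≤ 3 + ∑ n ∈ Icc 1 K, (window n).card := by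
    refine (card_le_card (filter_mem_gapSet_subset N)).trans ((card_union_le _ _).trans ?_)
    simpa using card_biUnion_le
  have hwindows : ∑ n ∈ Icc 1 K, ((window n).card : ℝ) ≤ 12 * (4 ^ K / K) := by
    calc ∑ n ∈ Icc 1 K, ((window n).card : ℝ)
        ≤ ∑ n ∈ Icc 1 K, 3 * ((4 : ℝ) ^ n / n) :=
          sum_le_sum fun n hn ↦ card_window_le (mem_Icc.mp hn).1
      _ ≤ 3 * ((4 : ℝ) ^ (K + 1) / K) := by
          rw [← mul_sum]; gcongr; exact sum_Icc_pow_div_le (by norm_num) hK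
      _ = 12 * (4 ^ K / K) := by ring
  have hone : (1 : ℝ) ≤ 4 ^ K / K := by
    exact_mod_cast one_le_pow_div_self (b := 4) (by norm_num) hK
  have hpowN : (4 : ℝ) ^ K ≤ N := by exact_mod_cast Nat.pow_log_le_self 4 (by omega)
  calc (countIn gapSet N : ℝ)
      ≤ 3 + ∑ n ∈ Icc 1 K, ((window n).card : ℝ) := by exact_mod_cast hcount
    _ ≤ 15 * (4 ^ K / K) := by linarith
    _ ≤ 15 * N / K := by rw [mul_div_assoc]; gcongr

theorem complement_density_zero :
    hasDensity (({m : ℕ | ∃ n : ℕ, 1 ≤ n ∧ 4 ^ n ≤ m ∧ (m : ℝ) < (2 - 1 / n) * 4 ^ n}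
        ∪ {m : ℕ | ∃ n : ℕ, 1 ≤ n ∧ (2 + 1 / n) * 4 ^ n ≤ (m : ℝ) ∧ m < 4 ^ (n + 1)})ᶜ) 0 := by
  show Tendsto (fun N ↦ (countIn gapSet N : ℝ) / N) atTop (nhds 0)
  have hlog : Tendsto (fun N ↦ (Nat.log 4 N : ℝ)) atTop atTop :=
    tendsto_natCast_atTop_atTop.comp (Nat.tendsto_log_atTop (by norm_num))
  refine squeeze_zero' (Eventually.of_forall fun N ↦ by positivity) ?_
    ((tendsto_const_nhds (x := (15 : ℝ))).div_atTop hlog)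
  filter_upwards [eventually_ge_atTop 4] with N hN
  have hN' : (0 : ℝ) < N := by positivity
  rw [div_le_iff₀ hN', div_mul_eq_mul_div]
  exact countIn_gapSet_le hN
end

section
/- Let θ > 0 and let U ⊆ ℝ/ℤ be such that U and U + θ (mod 1) are at positive distance in the torus. Let A = {m ∈ ℕ : {θ log₂ m} ∈ U}, where {x} denotes fractional part. Then there is no infinite set B ⊆ ℕ and t ∈ ℕ with B + B + t ⊆ A. -/
/-! For a fixed `b ∈ B` and `n ∈ B` large, `θ log₂ (2n + t) - θ log₂ (b + n + t) → θ log₂ 2 = θ`,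
so the points `θ log₂ (n + n + t)` and `θ log₂ (b + n + t)` of `U` witness that the distance
between `U` and `U + θ` is zero. -/

open Filter Topology Real

open scoped Classical

theorem AddCircle.dist_coe_le_abs_sub {p : ℝ} (x y : ℝ) :
    dist (x : AddCircle p) (y : AddCircle p) ≤ |x - y| := by
  rw [dist_eq_norm, ← AddCircle.coe_sub]
  exact QuotientAddGroup.norm_mk_le_norm

theorem tendsto_logb_add_mul_sub_logb_add_mul (β a b : ℝ) {c d : ℝ} (hc : 0 < c) (hd : 0 < d) :
    Tendsto (fun k : ℕ => logb β (a + c * k) - logb β (b + d * k)) atTop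
      (𝓝 (logb β (c / d))) := by
  have hpos : ∀ f e : ℝ, 0 < e → ∀ᶠ k : ℕ in atTop, 0 < f + e * k := fun f _ he =>
    (tendsto_atTop_add_const_left _ f
      (tendsto_natCast_atTop_atTop.const_mul_atTop he)).eventually_gt_atTop 0
  refine ((tendsto_add_mul_div_add_mul_atTop_nhds a b c hd.ne').logb
    (div_pos hc hd).ne').congr' ?_
  filter_upwards [hpos a c hc, hpos b d hd] with k hak hbk
  exact logb_div hak.ne' hbk.ne'

theorem no_BBt_log_example_general (θ : ℝ) (U : Set (AddCircle (1 : ℝ)))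
    (hsep : ∃ ε > 0, ∀ u ∈ U, ∀ v ∈ U, ε ≤ dist u (v + (θ : AddCircle (1 : ℝ)))) :
    ∀ (B : Set ℕ) (t : ℕ), B.Infinite →
      ¬ (∀ b₁ ∈ B, ∀ b₂ ∈ B,
          ((θ * Real.logb 2 (b₁ + b₂ + t) : ℝ) : AddCircle (1 : ℝ)) ∈ U) := by
  rintro B t hB hBU
  obtain ⟨ε, hε, hsep⟩ := hsep
  obtain ⟨b, hb⟩ := hB.nonempty
  have hgap : Tendsto (fun n : ℕ => θ * logb 2 (n + n + t) - θ * logb 2 (b + n + t))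
      atTop (𝓝 θ) := by
    have h := (tendsto_logb_add_mul_sub_logb_add_mul 2 t (t + b) two_pos one_pos).const_mul θ
    rw [div_one, logb_self_eq_one one_lt_two, mul_one] at h
    refine h.congr fun n => ?_
    rw [mul_sub]
    ring_nf
  obtain ⟨n, hn, hnB⟩ := ((hgap.eventually (Metric.ball_mem_nhds θ hε)).and_frequently
    (Nat.frequently_atTop_iff_infinite.2 hB)).exists
  refine (hsep _ (hBU n hnB n hnB) _ (hBU b hb n hnB)).not_gt ?_
  calc _ ≤ |θ * logb 2 (n + n + t) - (θ * logb 2 (b + n + t) + θ)| := by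
        rw [← AddCircle.coe_add]
        exact AddCircle.dist_coe_le_abs_sub _ _
    _ < ε := by
        rw [← sub_sub]
        exact hn

theorem no_BBt_log_example (θ : ℝ) (hθ : 0 < θ) (U : Set (AddCircle (1 : ℝ)))
    (hsep : ∃ ε > 0, ∀ u ∈ U, ∀ v ∈ U, ε ≤ dist u (v + (θ : AddCircle (1 : ℝ)))) :
    ∀ (B : Set ℕ) (t : ℕ), B.Infinite →
      ¬ (∀ b₁ ∈ B, ∀ b₂ ∈ B,
          ((θ * Real.logb 2 (b₁ + b₂ + t) : ℝ) : AddCircle (1 : ℝ)) ∈ U) :=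
  no_BBt_log_example_general θ U hsep
end
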